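/- Let C ⊂ S² be a convex body and let K be a supporting hemisphere of C with width_K(C) < π/2. Then the supporting hemisphere K* of C for which the lune K ∩ K* has thickness width_K(C) is unique. -/

import Mathlib

open scoped InnerProductSpace

noncomputable section

abbrev E3 := EuclideanSpace ℝ (Fin 3)

/-- The unit sphere S² in E³. -/
def S2 : Set E3 := Metric.sphere 0 1

/-- Spherical (geodesic) distance on the unit sphere. -/
def sdist (x y : E3) : ℝ := Real.arccos ⟪x, y⟫_ℝ

/-- The shorter great-circle arc joining `a` and `b`. -/
def arc (a b : E3) : Set E3 := {x | x ∈ S2 ∧ sdist a x + sdist x b = sdist a b}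

/-- Spherical convexity. -/
def SphConvex (A : Set E3) : Prop :=
  A ⊆ S2 ∧ (∀ x ∈ A, -x ∉ A) ∧ ∀ a ∈ A, ∀ b ∈ A, arc a b ⊆ A

/-- Closed hemisphere with center `c`. -/
def hemi (c : E3) : Set E3 := {x ∈ S2 | sdist c x ≤ Real.pi / 2}

/-- Open hemisphere with center `c`. -/
def openHemi (c : E3) : Set E3 := {x ∈ S2 | sdist c x < Real.pi / 2}

/-- Boundary of `A` relative to the sphere. -/
def relBoundary (A : Set E3) : Set E3 :=
  {p ∈ S2 | ∀ r > 0, (Metric.ball p r ∩ S2 ∩ A).Nonempty ∧ ((Metric.ball p r ∩ S2) \ A).Nonempty}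

/-- `A` has nonempty interior relative to the sphere. -/
def relIntNonempty (A : Set E3) : Prop := ∃ p ∈ S2, ∃ r > 0, Metric.ball p r ∩ S2 ⊆ A

/-- A spherical convex body. -/
def SphConvexBody (A : Set E3) : Prop := IsClosed A ∧ SphConvex A ∧ relIntNonempty A

/-- The hemisphere centered at `c` supports `A`. -/
def Supports (c : E3) (A : Set E3) : Prop :=
  c ∈ S2 ∧ A ⊆ hemi c ∧ ∃ p ∈ A, sdist c p = Real.pi / 2

/-- The hemisphere centered at `c` supports `A` at the point `p`. -/
def SupportsAt (c : E3) (A : Set E3) (p : E3) : Prop :=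
  c ∈ S2 ∧ A ⊆ hemi c ∧ p ∈ A ∧ sdist c p = Real.pi / 2

/-- `hemi g` and `hemi h` form a lune: distinct hemispheres with non-antipodal centers. -/
def IsLunePair (g h : E3) : Prop := g ∈ S2 ∧ h ∈ S2 ∧ g ≠ h ∧ g ≠ -h

/-- The center (midpoint) of the semicircle `G/H ⊆ bd(hemi g)` bounding the lune
`hemi g ∩ hemi h`: the point of the great circle `bd(hemi g)` nearest to `h`. -/
def scCenter (g h : E3) : E3 := ‖h - ⟪h, g⟫_ℝ • g‖⁻¹ • (h - ⟪h, g⟫_ℝ • g)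

/-- Thickness of the lune `hemi g ∩ hemi h`: the spherical distance between the
centers of its two bounding semicircles. -/
def luneTh (g h : E3) : ℝ := sdist (scCenter g h) (scCenter h g)

/-- The width of `A` determined by the supporting hemisphere centered at `c`:
the minimal thickness of a lune `K ∩ K*` with `K*` supporting `A`. -/
def widthAt (c : E3) (A : Set E3) : ℝ :=
  sInf {t | ∃ c', Supports c' A ∧ IsLunePair c c' ∧ t = luneTh c c'}

/-- The thickness of `A`: the minimum of `widthAt` over supporting hemispheres. -/
def thickness (A : Set E3) : ℝ :=
  sInf {t | ∃ c, Supports c A ∧ t = widthAt c A}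

/-- `A` is of constant width `w`. -/
def ConstWidth (A : Set E3) (w : ℝ) : Prop := ∀ c, Supports c A → widthAt c A = w

/-- A reduced spherical convex body. -/
def Reduced (R : Set E3) : Prop :=
  SphConvexBody R ∧ ∀ Z, SphConvexBody Z → Z ⊆ R → Z ≠ R → thickness Z < thickness R

/-- Cross product in E³. -/
def cross (u v : E3) : E3 :=
  (WithLp.equiv 2 (Fin 3 → ℝ)).symm
    ![u 1 * v 2 - u 2 * v 1, u 2 * v 0 - u 0 * v 2, u 0 * v 1 - u 1 * v 0]

/-- Orientation determinant of a triple of vectors in E³. -/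
def det3 (u v w : E3) : ℝ := ⟪cross u v, w⟫_ℝ

/-- `m` lies strictly between `m₁` and `m₂` in counterclockwise order
(positively oriented triple): the relation `≺ M₁ M M₂`. -/
def CCWBetween (m₁ m m₂ : E3) : Prop := 0 < det3 m₁ m m₂

/-- `c` is the center of the right supporting hemisphere of `A` at `p`. -/
def RightSupport (c : E3) (A : Set E3) (p : E3) : Prop :=
  SupportsAt c A p ∧ ∀ c', SupportsAt c' A p → 0 ≤ ⟪c', cross p c⟫_ℝ

/-- `c` is the center of the left supporting hemisphere of `A` at `p`. -/
def LeftSupport (c : E3) (A : Set E3) (p : E3) : Prop :=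
  SupportsAt c A p ∧ ∀ c', SupportsAt c' A p → ⟪c', cross p c⟫_ℝ ≤ 0

/-- Spherical angle at vertex `b` of the triangle `a b c`. -/
def sAngle (a b c : E3) : ℝ :=
  InnerProductGeometry.angle (a - ⟪a, b⟫_ℝ • b) (c - ⟪c, b⟫_ℝ • b)

/-- Spherical convex hull. -/
def sconvHull (A : Set E3) : Set E3 := ⋂₀ {B | A ⊆ B ∧ SphConvex B}

/-- Distance from a point to a set, in the spherical metric. -/
def sInfDist (x : E3) (A : Set E3) : ℝ := sInf (sdist x '' A)

/-- Hausdorff distance with respect to the spherical metric. -/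
def sHD (A B : Set E3) : ℝ :=
  max (sSup ((fun a => sInfDist a B) '' A)) (sSup ((fun b => sInfDist b A) '' B))

/-!
A closed hemisphere `hemi x` contains `C` iff `x` is a unit vector of the inner dual cone of `C`,
and the lune `hemi c ∩ hemi c'` has thickness `arccos (-⟪c, c'⟫)`, increasing in `⟪c, c'⟫`.
So the candidates for `K*` are the minimizers `z` of `⟪c, ·⟫` over the unit vectors of the dual
cone, which exist by compactness. A minimizer supports `C`: were `C` strictly inside `hemi z`,
tilting `z` away from `c` would stay in the cone and lower `⟪c, ·⟫`. Width below `π / 2` means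
`⟪c, z⟫ < 0`, and then a second minimizer `y ≠ z` is impossible: `y + z` lies in the cone and
`⟪c, y + z⟫ = 2 ⟪c, z⟫ < ⟪c, z⟫ ‖y + z‖` as `‖y + z‖ < 2`, so `(y + z) / ‖y + z‖` beats `z`.
-/

open Metric

section InnerProductSpace

variable {E : Type*} [NormedAddCommGroup E] [InnerProductSpace ℝ E]

theorem abs_real_inner_lt_one_iff {x y : E} (hx : ‖x‖ = 1) (hy : ‖y‖ = 1) :
    |⟪x, y⟫_ℝ| < 1 ↔ x ≠ y ∧ x ≠ -y := by
  rw [abs_lt, ← inner_lt_one_iff_real_of_norm_eq_one hx hy,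
    ← inner_lt_one_iff_real_of_norm_eq_one hx (by rwa [norm_neg]), inner_neg_right, neg_lt,
    and_comm]

theorem real_inner_sub_smul_lt_mul_norm {c z : E} (hc : ‖c‖ = 1) (hz : ‖z‖ = 1)
    (hcz : |⟪c, z⟫_ℝ| < 1) {t : ℝ} (ht : 0 < t) :
    ⟪c, z - t • c⟫_ℝ < ⟪c, z⟫_ℝ * ‖z - t • c‖ := by
  set a := ⟪c, z⟫_ℝ
  obtain ⟨ha₁, ha₂⟩ := abs_lt.1 hcz
  have hinner : ⟪c, z - t • c⟫_ℝ = a - t := by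
    rw [inner_sub_right, real_inner_smul_right, real_inner_self_eq_norm_sq, hc]; ring
  have hsq : ‖z - t • c‖ ^ 2 = 1 - 2 * t * a + t ^ 2 := by
    rw [norm_sub_sq_real, real_inner_smul_right, norm_smul, hz, hc, real_inner_comm]
    simp only [Real.norm_eq_abs, mul_one, sq_abs]; ring
  set s := ‖z - t • c‖
  have hs : 0 ≤ s := norm_nonneg _
  have hkey : (a - t) ^ 2 - (a * s) ^ 2 = t * (1 - a ^ 2) * (t - 2 * a) := by
    rw [mul_pow, hsq]; ring
  have h1a : 0 < 1 - a ^ 2 := by nlinarith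
  rw [hinner]
  by_contra! hle
  rcases le_or_gt a 0 with ha | ha
  · nlinarith [mul_pos ht h1a,
      mul_nonneg (sub_nonneg.2 hle) (by nlinarith : 0 ≤ t - a - a * s)]
  · rcases lt_or_ge t a with hta | hat
    · nlinarith [mul_pos ht h1a,
        mul_nonneg (sub_nonneg.2 hle) (by nlinarith : 0 ≤ a - t + a * s)]
    · have hs₀ : 0 < s := by
        refine lt_of_le_of_ne hs fun h0 => ?_
        nlinarith [h0 ▸ hsq]
      nlinarith [mul_pos ha hs₀]

theorem PointedCone.real_inner_mul_norm_le_of_isMinOn {K : PointedCone ℝ E} {c z w : E}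
    (hmin : IsMinOn (⟪c, ·⟫_ℝ) (sphere 0 1 ∩ K) z) (hw : w ∈ K) :
    ⟪c, z⟫_ℝ * ‖w‖ ≤ ⟪c, w⟫_ℝ := by
  rcases eq_or_ne w 0 with rfl | hw₀
  · simp
  have hmem : ‖w‖⁻¹ • w ∈ sphere (0 : E) 1 ∩ K :=
    ⟨by simpa using norm_smul_inv_norm (𝕜 := ℝ) hw₀, K.smul_mem (by positivity) hw⟩
  have := isMinOn_iff.1 hmin _ hmem
  rw [real_inner_smul_right] at this
  have hpos : 0 < ‖w‖ := norm_pos_iff.2 hw₀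
  rwa [← le_div_iff₀ hpos, div_eq_inv_mul]

theorem PointedCone.eq_of_isMinOn_of_real_inner_neg {K : PointedCone ℝ E} {c y z : E}
    (hmin : IsMinOn (⟪c, ·⟫_ℝ) (sphere 0 1 ∩ K) z) (hy : y ∈ sphere 0 1 ∩ K)
    (hz : z ∈ sphere 0 1 ∩ K) (hyz : ⟪c, y⟫_ℝ = ⟪c, z⟫_ℝ) (hneg : ⟪c, z⟫_ℝ < 0) : y = z := by
  have hy₁ : ‖y‖ = 1 := by simpa using hy.1
  have hz₁ : ‖z‖ = 1 := by simpa using hz.1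
  have hmid := real_inner_mul_norm_le_of_isMinOn hmin (K.add_mem hy.2 hz.2)
  rw [inner_add_right, hyz] at hmid
  have hnorm : 2 ≤ ‖y + z‖ := by nlinarith
  have hsq := norm_add_sq_real y z
  rw [hy₁, hz₁] at hsq
  refine (inner_eq_one_iff_of_norm_eq_one (𝕜 := ℝ) hy₁ hz₁).1 (le_antisymm ?_ ?_)
  · exact real_inner_le_one_of_norm_eq_one hy₁ hz₁
  · nlinarith

variable [CompleteSpace E]

theorem exists_real_inner_eq_zero_of_isMinOn {C : Set E} (hC : IsCompact C)
    (hCne : C.Nonempty) (hC₁ : C ⊆ closedBall 0 1) {c z : E} (hc : ‖c‖ = 1)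
    (hmin : IsMinOn (⟪c, ·⟫_ℝ) (sphere 0 1 ∩ (ProperCone.innerDual C : Set E)) z)
    (hz : z ∈ sphere 0 1 ∩ ProperCone.innerDual C) (hcz : |⟪c, z⟫_ℝ| < 1) :
    ∃ p ∈ C, ⟪p, z⟫_ℝ = 0 := by
  by_contra! hpos
  obtain ⟨p, hp, hpmin⟩ := hC.exists_isMinOn hCne
    (continuous_id.inner continuous_const : Continuous (⟪·, z⟫_ℝ)).continuousOn
  set δ := ⟪p, z⟫_ℝ
  have hδ : 0 < δ := lt_of_le_of_ne (hz.2 hp) (hpos p hp).symm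
  have hmem : z - δ • c ∈ ProperCone.innerDual C := by
    refine ProperCone.mem_innerDual.2 fun x hx => ?_
    have hxc : ⟪x, c⟫_ℝ ≤ 1 := by
      simpa [hc] using (real_inner_le_norm x c).trans
        (mul_le_of_le_one_left (norm_nonneg c) (by simpa using hC₁ hx))
    have hxz : δ ≤ ⟪x, z⟫_ℝ := isMinOn_iff.1 hpmin x hx
    rw [inner_sub_right, real_inner_smul_right]
    nlinarith
  exact (real_inner_sub_smul_lt_mul_norm hc (by simpa using hz.1) hcz hδ).not_ge
    (PointedCone.real_inner_mul_norm_le_of_isMinOn (K := (ProperCone.innerDual C).toPointedCone)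
      hmin hmem)

end InnerProductSpace

theorem mem_S2_iff {x : E3} : x ∈ S2 ↔ ‖x‖ = 1 := mem_sphere_zero_iff_norm

theorem isLunePair_iff {g h : E3} : IsLunePair g h ↔ g ∈ S2 ∧ h ∈ S2 ∧ |⟪g, h⟫_ℝ| < 1 := by
  refine ⟨fun ⟨hg, hh, hne⟩ => ⟨hg, hh, ?_⟩, fun ⟨hg, hh, hlt⟩ => ⟨hg, hh, ?_⟩⟩
  · exact (abs_real_inner_lt_one_iff (mem_S2_iff.1 hg) (mem_S2_iff.1 hh)).2 hne
  · exact (abs_real_inner_lt_one_iff (mem_S2_iff.1 hg) (mem_S2_iff.1 hh)).1 hlt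

theorem luneTh_eq_arccos {g h : E3} (hgh : IsLunePair g h) :
    luneTh g h = Real.arccos (-⟪g, h⟫_ℝ) := by
  obtain ⟨hg, hh, hτ⟩ := isLunePair_iff.1 hgh
  rw [mem_S2_iff] at hg hh
  set τ := ⟪g, h⟫_ℝ
  have hτ' : ⟪h, g⟫_ℝ = τ := real_inner_comm g h
  have h1τ : 0 < 1 - τ ^ 2 := by nlinarith [abs_lt.1 hτ]
  have hu : ‖h - τ • g‖ ^ 2 = 1 - τ ^ 2 := by
    rw [norm_sub_sq_real, real_inner_smul_right, norm_smul, hg, hh, hτ', Real.norm_eq_abs]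
    ring_nf; rw [sq_abs]; ring
  have hv : ‖g - τ • h‖ ^ 2 = 1 - τ ^ 2 := by
    rw [norm_sub_sq_real, real_inner_smul_right, norm_smul, hg, hh, Real.norm_eq_abs]
    ring_nf; rw [sq_abs]; ring
  have huv : ⟪h - τ • g, g - τ • h⟫_ℝ = -τ * (1 - τ ^ 2) := by
    simp only [inner_sub_left, inner_sub_right, real_inner_smul_left, real_inner_smul_right,
      real_inner_self_eq_norm_sq, hg, hh, hτ']
    ring
  have hnorm : ‖g - τ • h‖ = ‖h - τ • g‖ :=
    (sq_eq_sq₀ (norm_nonneg _) (norm_nonneg _)).1 (hv.trans hu.symm)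
  rw [luneTh, sdist, scCenter, scCenter, hτ', real_inner_smul_left, real_inner_smul_right, huv,
    hnorm, ← mul_assoc, ← mul_inv, ← sq, hu]
  field_simp

theorem luneTh_le_luneTh_iff {g h h' : E3} (hh : IsLunePair g h) (hh' : IsLunePair g h') :
    luneTh g h ≤ luneTh g h' ↔ ⟪g, h⟫_ℝ ≤ ⟪g, h'⟫_ℝ := by
  have hmem {k : E3} (hk : IsLunePair g k) : -⟪g, k⟫_ℝ ∈ Set.Icc (-1 : ℝ) 1 := by
    have := abs_lt.1 (isLunePair_iff.1 hk).2.2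
    constructor <;> linarith
  rw [luneTh_eq_arccos hh, luneTh_eq_arccos hh',
    Real.strictAntiOn_arccos.le_iff_ge (hmem hh) (hmem hh'), neg_le_neg_iff]

theorem mem_hemi_iff {c x : E3} : x ∈ hemi c ↔ x ∈ S2 ∧ 0 ≤ ⟪x, c⟫_ℝ := by
  rw [hemi, Set.mem_sep_iff, sdist, Real.arccos_le_pi_div_two, real_inner_comm]

theorem openHemi_subset_hemi (q : E3) : openHemi q ⊆ hemi q := fun _ hx => ⟨hx.1, hx.2.le⟩

theorem mem_S2_inter_innerDual_iff {A : Set E3} (hA : A ⊆ S2) {c : E3} :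
    c ∈ S2 ∩ (ProperCone.innerDual A : Set E3) ↔ c ∈ S2 ∧ A ⊆ hemi c := by
  simp only [Set.mem_inter_iff, SetLike.mem_coe, ProperCone.mem_innerDual, Set.subset_def,
    mem_hemi_iff]
  exact and_congr_right fun _ => forall₂_congr fun x hx => (and_iff_right (hA hx)).symm

theorem supports_iff {A : Set E3} (hA : A ⊆ S2) {c : E3} :
    Supports c A ↔ c ∈ S2 ∩ (ProperCone.innerDual A : Set E3) ∧ ∃ p ∈ A, ⟪p, c⟫_ℝ = 0 := by
  rw [mem_S2_inter_innerDual_iff hA, Supports, and_assoc]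
  refine and_congr_right fun _ => and_congr_right fun _ => exists_congr fun p => ?_
  rw [sdist, Real.arccos_eq_pi_div_two, real_inner_comm]

theorem Supports.ne_of_subset_openHemi {A : Set E3} {c q : E3} (hc : Supports c A)
    (hq : A ⊆ openHemi q) : c ≠ q := by
  rintro rfl
  obtain ⟨p, hp, hcp⟩ := hc.2.2
  exact (hq hp).2.ne hcp

open Filter Topology in
theorem relIntNonempty.exists_real_inner_ne_zero {A : Set E3} (hA : relIntNonempty A) {w : E3}
    (hw : ‖w‖ = 1) : ∃ p ∈ A, ⟪p, w⟫_ℝ ≠ 0 := by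
  obtain ⟨p, hp, r, hr, hball⟩ := hA
  by_cases hpw : ⟪p, w⟫_ℝ = 0
  swap
  · exact ⟨p, hball ⟨mem_ball_self hr, hp⟩, hpw⟩
  rw [mem_S2_iff] at hp
  set γ : ℝ → E3 := fun θ => Real.cos θ • p + Real.sin θ • w
  have hγS (θ : ℝ) : γ θ ∈ S2 := by
    rw [mem_S2_iff, ← pow_eq_one_iff_of_nonneg (norm_nonneg _) two_ne_zero, norm_add_sq_real,
      norm_smul, norm_smul, real_inner_smul_left, real_inner_smul_right, hpw, hp, hw]
    simp only [Real.norm_eq_abs, mul_one, sq_abs, mul_zero, add_zero]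
    exact Real.cos_sq_add_sin_sq θ
  have hγw (θ : ℝ) : ⟪γ θ, w⟫_ℝ = Real.sin θ := by
    simp only [γ, inner_add_left, real_inner_smul_left, hpw, real_inner_self_eq_norm_sq, hw]
    ring
  have hnear : ∀ᶠ θ in 𝓝 0, γ θ ∈ ball p r := by
    have hγ0 : γ 0 = p := by simp [γ]
    exact (show Continuous γ by fun_prop).continuousAt.eventually
      (isOpen_ball.mem_nhds (hγ0 ▸ mem_ball_self hr))
  have hsin : ∀ᶠ θ in 𝓝[>] 0, 0 < Real.sin θ :=
    eventually_of_mem (Ioo_mem_nhdsGT Real.pi_pos) fun θ hθ =>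
      Real.sin_pos_of_pos_of_lt_pi hθ.1 hθ.2
  obtain ⟨θ, hθr, hθ⟩ := ((hnear.filter_mono nhdsWithin_le_nhds).and hsin).exists
  exact ⟨γ θ, hball ⟨hθr, hγS θ⟩, (hγw θ).trans_ne hθ.ne'⟩

theorem relIntNonempty.neg_notMem_innerDual {A : Set E3} (hA : relIntNonempty A) {c : E3}
    (hc : ‖c‖ = 1) (hcA : c ∈ ProperCone.innerDual A) : -c ∉ ProperCone.innerDual A := by
  intro hnegA
  obtain ⟨p, hp, hpc⟩ := hA.exists_real_inner_ne_zero hc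
  have : 0 ≤ ⟪p, -c⟫_ℝ := hnegA hp
  rw [inner_neg_right] at this
  exact hpc (le_antisymm (by linarith) (hcA hp))

theorem isCompact_S2_inter_innerDual (A : Set E3) :
    IsCompact (S2 ∩ (ProperCone.innerDual A : Set E3)) :=
  (isCompact_sphere 0 1).inter_right (ProperCone.innerDual A).isClosed

theorem isLunePair_of_isMinOn {C : Set E3} (hCS : C ⊆ S2) (hCint : relIntNonempty C)
    {q c z : E3} (hq : q ∈ S2) (hsub : C ⊆ openHemi q) (hc : Supports c C)
    (hmin : IsMinOn (⟪c, ·⟫_ℝ) (S2 ∩ (ProperCone.innerDual C : Set E3)) z)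
    (hz : z ∈ S2 ∩ (ProperCone.innerDual C : Set E3)) : IsLunePair c z := by
  have hcF := ((supports_iff hCS).1 hc).1
  have hqF : q ∈ S2 ∩ (ProperCone.innerDual C : Set E3) :=
    (mem_S2_inter_innerDual_iff hCS).2 ⟨hq, hsub.trans (openHemi_subset_hemi q)⟩
  have hc₁ := mem_S2_iff.1 hc.1
  have hz₁ := mem_S2_iff.1 hz.1
  refine ⟨hc.1, hz.1, ?_, fun h => ?_⟩
  · refine (inner_lt_one_iff_real_of_norm_eq_one hc₁ hz₁).1
      ((isMinOn_iff.1 hmin q hqF).trans_lt ?_)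
    exact (inner_lt_one_iff_real_of_norm_eq_one hc₁ (mem_S2_iff.1 hq)).2
      (hc.ne_of_subset_openHemi hsub)
  · exact hCint.neg_notMem_innerDual hc₁ hcF.2 (by simpa [h] using hz.2)

/-- the supporting hemisphere K* realizing width_K(C) < π/2 is
unique. -/
theorem unique_opposite_hemisphere (C : Set E3) (hC : SphConvexBody C)
    (q : E3) (hq : q ∈ S2) (hsub : C ⊆ openHemi q)
    (c : E3) (hc : Supports c C) (hw : widthAt c C < Real.pi / 2) :
    ∃! c' : E3, Supports c' C ∧ IsLunePair c c' ∧ luneTh c c' = widthAt c C := by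
  obtain ⟨hCclosed, ⟨hCS, -⟩, hCint⟩ := hC
  have hcF := ((supports_iff hCS).1 hc).1
  obtain ⟨z, hzF, hmin⟩ := (isCompact_S2_inter_innerDual C).exists_isMinOn (f := (⟪c, ·⟫_ℝ))
    ⟨c, hcF⟩ (continuous_const.inner continuous_id).continuousOn
  have hlune : IsLunePair c z := isLunePair_of_isMinOn hCS hCint hq hsub hc hmin hzF
  have hz : Supports z C := by
    obtain ⟨p, hp, -⟩ := hc.2.2
    refine (supports_iff hCS).2 ⟨hzF, exists_real_inner_eq_zero_of_isMinOn
      ((isCompact_sphere 0 1).of_isClosed_subset hCclosed hCS) ⟨p, hp⟩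
      (hCS.trans sphere_subset_closedBall) (mem_S2_iff.1 hc.1) hmin hzF ?_⟩
    exact (isLunePair_iff.1 hlune).2.2
  have hwidth : widthAt c C = luneTh c z := by
    refine IsLeast.csInf_eq ⟨⟨z, hz, hlune, rfl⟩, ?_⟩
    rintro _ ⟨c', hc', hcc', rfl⟩
    exact (luneTh_le_luneTh_iff hlune hcc').2 (isMinOn_iff.1 hmin c' ((supports_iff hCS).1 hc').1)
  have hneg : ⟪c, z⟫_ℝ < 0 := by
    rw [hwidth, luneTh_eq_arccos hlune, Real.arccos_lt_pi_div_two] at hw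
    linarith
  refine ⟨z, ⟨hz, hlune, hwidth.symm⟩, fun y ⟨hy, hcy, hyw⟩ => ?_⟩
  have hyF := ((supports_iff hCS).1 hy).1
  have hyz : ⟪c, y⟫_ℝ = ⟪c, z⟫_ℝ := le_antisymm
    ((luneTh_le_luneTh_iff hcy hlune).1 (hyw.trans hwidth).le) (isMinOn_iff.1 hmin y hyF)
  exact PointedCone.eq_of_isMinOn_of_real_inner_neg hmin hyF hzF hyz hneg

end
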